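/- arXiv:1605.02212 — 3 statements merged into one kernel-verified Lean document; each statement's English description precedes it below -/
import Mathlib

section
/- Let (S,𝔉,τ) be a PM space with continuous triangle function and I an admissible ideal on ℕ×ℕ. A double sequence x = {x_{jk}} in S is strong I-statistically pre-Cauchy if and only if I-lim_{m,n→∞} (1/(m²n²)) Σ_{j,p ≤ m} Σ_{k,q ≤ n} d_L(F_{x_{jk} x_{pq}}, ε₀) = 0. -/
open Set

/-- A distance distribution function. -/
structure DDF where
  toFun : ℝ → ℝ
  mono' : Monotone toFun
  nonneg' : ∀ x, 0 ≤ toFun x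
  le_one' : ∀ x, toFun x ≤ 1
  zero' : ∀ x ≤ 0, toFun x = 0
  tendsto_one' : Filter.Tendsto toFun Filter.atTop (nhds 1)
  leftCont' : ∀ x > 0, ContinuousWithinAt toFun (Set.Iio x) x

instance : CoeFun DDF fun _ => ℝ → ℝ := ⟨DDF.toFun⟩

/-- The unit step at 0. -/
noncomputable def eps0 : DDF where
  toFun x := if 0 < x then 1 else 0
  mono' := by
    intro a b hab
    by_cases ha : 0 < a
    · simp [ha, lt_of_lt_of_le ha hab]
    · by_cases hb : 0 < b <;> simp [ha, hb]
  nonneg' := by intro x; split_ifs <;> norm_num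
  le_one' := by intro x; split_ifs <;> norm_num
  zero' := by intro x hx; simp [not_lt.mpr hx]
  tendsto_one' := by
    have h : (fun _ : ℝ => (1 : ℝ)) =ᶠ[Filter.atTop]
        fun x : ℝ => if 0 < x then (1:ℝ) else 0 := by
      filter_upwards [Filter.eventually_gt_atTop (0:ℝ)] with x hx
      simp [hx]
    exact tendsto_const_nhds.congr' h
  leftCont' := by
    intro x hx
    have h : (fun _ : ℝ => (1 : ℝ)) =ᶠ[nhdsWithin x (Set.Iio x)]
        fun y : ℝ => if 0 < y then (1:ℝ) else 0 := by
      have hev : ∀ᶠ y in nhds x, (0:ℝ) < y := eventually_gt_nhds hx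
      filter_upwards [nhdsWithin_le_nhds hev] with y hy
      simp [hy]
    have : Filter.Tendsto (fun y : ℝ => if 0 < y then (1:ℝ) else 0)
        (nhdsWithin x (Set.Iio x)) (nhds 1) := tendsto_const_nhds.congr' h
    simpa [ContinuousWithinAt, hx] using this

/-- The modified Lévy metric on distance distribution functions. -/
noncomputable def dL (F G : DDF) : ℝ :=
  sInf {h : ℝ | 0 < h ∧ h ≤ 1 ∧ ∀ x : ℝ, 0 < x → x < 1 / h →
    (F (x - h) - h ≤ G x ∧ G x ≤ F (x + h) + h ∧
     G (x - h) - h ≤ F x ∧ F x ≤ G (x + h) + h)}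

/-- A probabilistic metric space under a triangle function. -/
structure PMSpace (S : Type*) where
  F : S → S → DDF
  tri : DDF → DDF → DDF
  F_self : ∀ a, F a a = eps0
  F_ne : ∀ a b, a ≠ b → F a b ≠ eps0
  F_symm : ∀ a b, F a b = F b a
  F_triangle : ∀ a b c, ∀ x : ℝ, (tri (F a b) (F b c)) x ≤ (F a c) x
  tri_comm : ∀ G H, tri G H = tri H G
  tri_assoc : ∀ G H K, tri (tri G H) K = tri G (tri H K)
  tri_mono : ∀ G G' H, (∀ x, G x ≤ G' x) → ∀ x, (tri G H) x ≤ (tri G' H) x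
  tri_id : ∀ G, tri eps0 G = G

/-- Continuity of the triangle function with respect to the Lévy metric. -/
def TriContinuous {S : Type*} (P : PMSpace S) : Prop :=
  ∀ G H : DDF, ∀ ε > 0, ∃ η > 0, ∀ G' H' : DDF,
    dL G G' < η → dL H H' < η → dL (P.tri G H) (P.tri G' H') < ε

/-- Ideals, admissibility. -/
def IsIdeal {α : Type*} (I : Set (Set α)) : Prop :=
  ∅ ∈ I ∧ (∀ A B : Set α, A ∈ I → B ∈ I → A ∪ B ∈ I) ∧
    (∀ A B : Set α, B ⊆ A → A ∈ I → B ∈ I)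

def Admissible (I : Set (Set (ℕ × ℕ))) : Prop :=
  IsIdeal I ∧ Set.univ ∉ I ∧ ∀ p : ℕ × ℕ, ({p} : Set (ℕ × ℕ)) ∈ I

def StronglyAdmissible (I : Set (Set (ℕ × ℕ))) : Prop :=
  IsIdeal I ∧ Set.univ ∉ I ∧
    ∀ i : ℕ, ({i} ×ˢ (Set.univ : Set ℕ)) ∈ I ∧ ((Set.univ : Set ℕ) ×ˢ {i}) ∈ I

/-- `dens A m n` is `(1/(mn)) |{(j,k) ∈ A : j ≤ m, k ≤ n}|`. -/
noncomputable def dens (A : Set (ℕ × ℕ)) (m n : ℕ) : ℝ :=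
  ({jk ∈ A | 1 ≤ jk.1 ∧ jk.1 ≤ m ∧ 1 ≤ jk.2 ∧ jk.2 ≤ n}.ncard : ℝ) / (m * n)

/-- `dens2 A m n` is `(1/(m²n²)) |{((j,k),(p,q)) ∈ A : j,p ≤ m, k,q ≤ n}|`. -/
noncomputable def dens2 (A : Set ((ℕ × ℕ) × (ℕ × ℕ))) (m n : ℕ) : ℝ :=
  ({q ∈ A | 1 ≤ q.1.1 ∧ q.1.1 ≤ m ∧ 1 ≤ q.2.1 ∧ q.2.1 ≤ m ∧
      1 ≤ q.1.2 ∧ q.1.2 ≤ n ∧ 1 ≤ q.2.2 ∧ q.2.2 ≤ n}.ncard : ℝ) /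
    ((m : ℝ) ^ 2 * (n : ℝ) ^ 2)

variable {S : Type*}

/-- Strong `I`-statistically pre-Cauchy double sequences in a PM space, stated
via the Lévy distance `d_L(F_{x_{jk}x_{pq}}, ε₀) ≥ t`. -/
def StrongIStatPreCauchy (I : Set (Set (ℕ × ℕ))) (P : PMSpace S)
    (x : ℕ → ℕ → S) : Prop :=
  ∀ t > (0:ℝ), ∀ δ > (0:ℝ),
    {mn : ℕ × ℕ | δ ≤ dens2
      {q : (ℕ × ℕ) × (ℕ × ℕ) |
        t ≤ dL (P.F (x q.1.1 q.1.2) (x q.2.1 q.2.2)) eps0} mn.1 mn.2} ∈ I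

/-- `I`-limit of a real double sequence. -/
def ILim (I : Set (Set (ℕ × ℕ))) (y : ℕ → ℕ → ℝ) (L : ℝ) : Prop :=
  ∀ ε > (0:ℝ), {mn : ℕ × ℕ | ε ≤ |y mn.1 mn.2 - L|} ∈ I

/-- `(1/(m²n²)) Σ_{j,p ≤ m} Σ_{k,q ≤ n} d_L(F_{x_{jk}x_{pq}}, ε₀)`. -/
noncomputable def avgdL (P : PMSpace S) (x : ℕ → ℕ → S) (m n : ℕ) : ℝ :=
  (∑ j ∈ Finset.Icc 1 m, ∑ p ∈ Finset.Icc 1 m, ∑ k ∈ Finset.Icc 1 n,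
      ∑ q ∈ Finset.Icc 1 n, dL (P.F (x j k) (x p q)) eps0) /
    ((m : ℝ) ^ 2 * (n : ℝ) ^ 2)

/-!
`d_L(F, ε₀)` takes values in `[0, 1]`, so on each box of indices its average is squeezed by the
density `d` of the pairs with `d_L ≥ t`: Markov's inequality gives `t · d ≤ avg`, and splitting the
sum at `t` gives `avg ≤ d + t`. Hence `{avg ≥ ε} ⊆ {d ≥ ε/2}` for `t = ε/2`, and
`{d ≥ δ} ⊆ {avg ≥ t δ}`; both inclusions are carried by the heredity of the ideal.
-/

lemma dL_nonneg (F G : DDF) : 0 ≤ dL F G :=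
  Real.sInf_nonneg fun _ hh => hh.1.le

lemma dL_le_one (F G : DDF) : dL F G ≤ 1 := by
  refine csInf_le ⟨0, fun _ hh => hh.1.le⟩ ⟨one_pos, le_rfl, fun y _ _ => ⟨?_, ?_, ?_, ?_⟩⟩
  · linarith [F.le_one' (y - 1), G.nonneg' y]
  · linarith [G.le_one' y, F.nonneg' (y + 1)]
  · linarith [G.le_one' (y - 1), F.nonneg' y]
  · linarith [F.le_one' y, G.nonneg' (y + 1)]

namespace Finset

variable {α : Type*} (s : Finset α) (f : α → ℝ) (t : ℝ)

lemma mul_card_filter_le_sum (hf : ∀ a ∈ s, 0 ≤ f a) :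
    t * #{a ∈ s | t ≤ f a} ≤ ∑ a ∈ s, f a :=
  calc t * #{a ∈ s | t ≤ f a} = ∑ _a ∈ s with t ≤ f _a, t := by simp [mul_comm]
    _ ≤ ∑ a ∈ s with t ≤ f a, f a := sum_le_sum fun _ ha => (mem_filter.1 ha).2
    _ ≤ ∑ a ∈ s, f a :=
      sum_le_sum_of_subset_of_nonneg (filter_subset _ _) fun a ha _ => hf a ha

lemma sum_le_card_filter_add_mul_card (hf : ∀ a ∈ s, f a ≤ 1) (ht : 0 ≤ t) :
    ∑ a ∈ s, f a ≤ #{a ∈ s | t ≤ f a} + t * #s := by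
  rw [← sum_filter_add_sum_filter_not s (t ≤ f ·)]
  gcongr ?_ + ?_
  · simpa using sum_le_card_nsmul _ f 1 fun a ha => hf a (mem_filter.1 ha).1
  · calc ∑ a ∈ s with ¬t ≤ f a, f a ≤ #{a ∈ s | ¬t ≤ f a} * t := by
          simpa using sum_le_card_nsmul _ f t fun a ha => (not_le.1 (mem_filter.1 ha).2).le
      _ ≤ t * #s := by
          rw [mul_comm]
          gcongr
          exact filter_subset _ _

end Finset

open Finset

def pairBox (m n : ℕ) : Finset ((ℕ × ℕ) × (ℕ × ℕ)) :=
  (Finset.Icc 1 m ×ˢ Finset.Icc 1 n) ×ˢ (Finset.Icc 1 m ×ˢ Finset.Icc 1 n)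

lemma card_pairBox (m n : ℕ) : (#(pairBox m n) : ℝ) = (m : ℝ) ^ 2 * (n : ℝ) ^ 2 := by
  simp only [pairBox, card_product, Nat.card_Icc, add_tsub_cancel_right, Nat.cast_mul]
  ring

lemma dens2_eq_card_filter_pairBox (p : (ℕ × ℕ) × (ℕ × ℕ) → Prop) [DecidablePred p] (m n : ℕ) :
    dens2 {q | p q} m n = #{q ∈ pairBox m n | p q} / #(pairBox m n) := by
  rw [dens2, card_pairBox, ← ncard_coe_finset]
  congr 3
  ext q
  simp only [pairBox, coe_filter, mem_product, Finset.mem_Icc, Set.mem_ofPred_eq]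
  tauto

noncomputable def pairLevy (P : PMSpace S) (x : ℕ → ℕ → S) (q : (ℕ × ℕ) × (ℕ × ℕ)) : ℝ :=
  dL (P.F (x q.1.1 q.1.2) (x q.2.1 q.2.2)) eps0

section avgdL

variable (P : PMSpace S) (x : ℕ → ℕ → S) (m n : ℕ)

lemma avgdL_eq_sum_pairBox :
    avgdL P x m n = (∑ q ∈ pairBox m n, pairLevy P x q) / #(pairBox m n) := by
  rw [avgdL, card_pairBox, pairBox, sum_product, sum_product]
  simp_rw [sum_product]
  exact congrArg (· / _) (sum_congr rfl fun _ _ => sum_comm)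

lemma avgdL_nonneg : 0 ≤ avgdL P x m n := by
  rw [avgdL_eq_sum_pairBox]
  exact div_nonneg (sum_nonneg fun q _ => dL_nonneg _ _) (Nat.cast_nonneg _)

lemma mul_dens2_le_avgdL (t : ℝ) :
    t * dens2 {q | t ≤ pairLevy P x q} m n ≤ avgdL P x m n := by
  classical
  rw [avgdL_eq_sum_pairBox, dens2_eq_card_filter_pairBox, ← mul_div_assoc]
  exact div_le_div_of_nonneg_right
    (mul_card_filter_le_sum _ _ t fun q _ => dL_nonneg _ _) (Nat.cast_nonneg _)

lemma avgdL_le_dens2_add {t : ℝ} (ht : 0 ≤ t) :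
    avgdL P x m n ≤ dens2 {q | t ≤ pairLevy P x q} m n + t := by
  classical
  rw [avgdL_eq_sum_pairBox, dens2_eq_card_filter_pairBox]
  rcases (Nat.cast_nonneg (α := ℝ) #(pairBox m n)).eq_or_lt with hcard | hcard
  · simpa [← hcard] using ht
  · rw [div_add' _ _ _ hcard.ne', div_le_div_iff_of_pos_right hcard]
    exact sum_le_card_filter_add_mul_card _ _ t (fun q _ => dL_le_one _ _) ht

end avgdL

theorem strongIStatPreCauchy_iff_avgdL_general
    (P : PMSpace S)
    (I : Set (Set (ℕ × ℕ))) (hI : Admissible I)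
    (x : ℕ → ℕ → S) :
    StrongIStatPreCauchy I P x ↔ ILim I (avgdL P x) 0 := by
  obtain ⟨⟨-, -, hI_mono⟩, -, -⟩ := hI
  simp only [ILim, sub_zero, abs_of_nonneg (avgdL_nonneg P x _ _)]
  constructor
  · intro hx ε hε
    refine hI_mono _ _ (fun mn hmn => ?_) (hx (ε / 2) (half_pos hε) (ε / 2) (half_pos hε))
    have := avgdL_le_dens2_add P x mn.1 mn.2 (half_pos hε).le
    exact show ε / 2 ≤ dens2 {q | ε / 2 ≤ pairLevy P x q} mn.1 mn.2 by linarith [hmn.out]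
  · intro hx t ht δ hδ
    refine hI_mono _ _ (fun mn hmn => ?_) (hx (t * δ) (mul_pos ht hδ))
    calc t * δ ≤ t * dens2 {q | t ≤ pairLevy P x q} mn.1 mn.2 := by gcongr; exact hmn
      _ ≤ avgdL P x mn.1 mn.2 := mul_dens2_le_avgdL P x mn.1 mn.2 t

/-- A double sequence `x` in a PM space with continuous triangle function is
strong `I`-statistically pre-Cauchy iff
`I-lim (1/(m²n²)) Σ_{j,p ≤ m} Σ_{k,q ≤ n} d_L(F_{x_{jk}x_{pq}}, ε₀) = 0`. -/
theorem strongIStatPreCauchy_iff_avgdL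
    (P : PMSpace S) (hτ : TriContinuous P)
    (I : Set (Set (ℕ × ℕ))) (hI : Admissible I)
    (x : ℕ → ℕ → S) :
    StrongIStatPreCauchy I P x ↔ ILim I (avgdL P x) 0 :=
  strongIStatPreCauchy_iff_avgdL_general P I hI x
end

section
/- Let (S,𝔉,τ) be a PM space with continuous triangle function, I a non-trivial strongly admissible ideal of ℕ×ℕ, and x = {x_{jk}} a double sequence in S that is strong I-statistically convergent to a point a. Then x has a subsequence that strongly converges to a; that is, there exist strictly increasing sequences (j_i) and (k_i) of natural numbers with d_L(F_{x_{j_i k_i} a}, ε₀) < 1/i for all i. -/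
/-!
If beyond some index pair `(J, K)` every term were at Lévy distance `≥ t` from `ε₀`, the bad set
would contain the whole quadrant `j > J, k > K`, hence have density at least `1/4` at every
`(m, n)` with `m > 2J`, `n > 2K`. Strong `I`-statistical convergence then puts that quadrant of
`(m, n)`'s into `I`; its complement is finitely many rows and columns, so `ℕ × ℕ ∈ I`.
Hence good terms occur beyond every `(J, K)` and for every `t > 0`, and a diagonal recursion with
`t = 1/(i+1)` extracts the subsequence.
-/

open Set

variable {S : Type*}

/-- Strong `I`-statistical convergence, via `d_L(F_{x_{jk}a}, ε₀) ≥ t`. -/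
def StrongIStatConv (I : Set (Set (ℕ × ℕ))) (P : PMSpace S)
    (x : ℕ → ℕ → S) (a : S) : Prop :=
  ∀ t > (0:ℝ), ∀ δ > (0:ℝ),
    {mn : ℕ × ℕ | δ ≤ dens
      {jk : ℕ × ℕ | t ≤ dL (P.F (x jk.1 jk.2) a) eps0} mn.1 mn.2} ∈ I

namespace IsIdeal

variable {α : Type*} {I : Set (Set α)}

theorem union_mem (hI : IsIdeal I) {A B : Set α} (hA : A ∈ I) (hB : B ∈ I) : A ∪ B ∈ I :=
  hI.2.1 A B hA hB

theorem mem_of_subset (hI : IsIdeal I) {A B : Set α} (hBA : B ⊆ A) (hA : A ∈ I) : B ∈ I :=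
  hI.2.2 A B hBA hA

end IsIdeal

namespace StronglyAdmissible

variable {I : Set (Set (ℕ × ℕ))}

theorem setOf_fst_lt_mem (hI : StronglyAdmissible I) (M : ℕ) : {mn : ℕ × ℕ | mn.1 < M} ∈ I := by
  induction M with
  | zero => simpa using hI.1.1
  | succ M ih =>
    have hsplit : {mn : ℕ × ℕ | mn.1 < M + 1} = {mn | mn.1 < M} ∪ {M} ×ˢ univ := by
      ext ⟨m, n⟩
      simp only [mem_ofPred_eq, mem_union, mem_prod, mem_singleton_iff, mem_univ, and_true]
      omega
    rw [hsplit]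
    exact hI.1.union_mem ih (hI.2.2 M).1

theorem setOf_snd_lt_mem (hI : StronglyAdmissible I) (N : ℕ) : {mn : ℕ × ℕ | mn.2 < N} ∈ I := by
  induction N with
  | zero => simpa using hI.1.1
  | succ N ih =>
    have hsplit : {mn : ℕ × ℕ | mn.2 < N + 1} = {mn | mn.2 < N} ∪ univ ×ˢ {N} := by
      ext ⟨m, n⟩
      simp only [mem_ofPred_eq, mem_union, mem_prod, mem_singleton_iff, mem_univ, true_and]
      omega
    rw [hsplit]
    exact hI.1.union_mem ih (hI.2.2 N).2

theorem setOf_le_and_le_notMem (hI : StronglyAdmissible I) (M N : ℕ) :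
    {mn : ℕ × ℕ | M ≤ mn.1 ∧ N ≤ mn.2} ∉ I := by
  intro hquad
  have hcover : univ ⊆ ({mn : ℕ × ℕ | mn.1 < M} ∪ {mn | mn.2 < N}) ∪
      {mn | M ≤ mn.1 ∧ N ≤ mn.2} := by
    rintro ⟨m, n⟩ -
    simp only [mem_union, mem_ofPred_eq]
    omega
  exact hI.2.1 <| hI.1.mem_of_subset hcover <|
    hI.1.union_mem (hI.1.union_mem (hI.setOf_fst_lt_mem M) (hI.setOf_snd_lt_mem N)) hquad

end StronglyAdmissible

theorem one_quarter_le_dens_of_forall_mem {A : Set (ℕ × ℕ)} {J K m n : ℕ}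
    (hA : ∀ j k, J < j → K < k → (j, k) ∈ A) (hm : 2 * J < m) (hn : 2 * K < n) :
    1 / 4 ≤ dens A m n := by
  set T := {jk ∈ A | 1 ≤ jk.1 ∧ jk.1 ≤ m ∧ 1 ≤ jk.2 ∧ jk.2 ≤ n}
  have hT : T.Finite := ((finite_Iic m).prod (finite_Iic n)).subset
    fun jk hjk => ⟨hjk.2.2.1, hjk.2.2.2.2⟩
  have hbox : (↑(Finset.Ioc J m ×ˢ Finset.Ioc K n) : Set (ℕ × ℕ)) ⊆ T := by
    rintro ⟨j, k⟩ hjk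
    simp only [Finset.coe_product, Finset.coe_Ioc, mem_prod, mem_Ioc] at hjk
    exact ⟨hA j k hjk.1.1 hjk.2.1, by omega, hjk.1.2, by omega, hjk.2.2⟩
  have hcard : (m - J) * (n - K) ≤ T.ncard := by
    simpa [Finset.card_product] using ncard_le_ncard hbox hT
  have harea : m * n ≤ 4 * ((m - J) * (n - K)) :=
    calc m * n ≤ (2 * (m - J)) * (2 * (n - K)) := Nat.mul_le_mul (by omega) (by omega)
      _ = 4 * ((m - J) * (n - K)) := by ring
  have hmn : (0 : ℝ) < m * n := by
    have : 0 < m * n := Nat.mul_pos (by omega) (by omega)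
    exact_mod_cast this
  rw [dens, le_div_iff₀ hmn]
  have : ((m * n : ℕ) : ℝ) ≤ 4 * T.ncard := by exact_mod_cast harea.trans (by omega)
  push_cast at this
  linarith

theorem StrongIStatConv.exists_dL_lt {I : Set (Set (ℕ × ℕ))} {P : PMSpace S}
    {x : ℕ → ℕ → S} {a : S} (hx : StrongIStatConv I P x a) (hI : StronglyAdmissible I)
    {t : ℝ} (ht : 0 < t) (J K : ℕ) :
    ∃ j k, J < j ∧ K < k ∧ dL (P.F (x j k) a) eps0 < t := by
  by_contra! hbad
  have hquad : {mn : ℕ × ℕ | 2 * J + 1 ≤ mn.1 ∧ 2 * K + 1 ≤ mn.2} ⊆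
      {mn | 1 / 4 ≤ dens {jk : ℕ × ℕ | t ≤ dL (P.F (x jk.1 jk.2) a) eps0} mn.1 mn.2} :=
    fun mn hmn => one_quarter_le_dens_of_forall_mem (fun j k => hbad j k) hmn.1 hmn.2
  exact hI.setOf_le_and_le_notMem _ _ (hI.1.mem_of_subset hquad (hx t ht (1 / 4) (by norm_num)))

theorem exists_strictMono_pair_of_forall_exists {p : ℕ → ℕ → ℕ → Prop}
    (h : ∀ i J K, ∃ j k, J < j ∧ K < k ∧ p i j k) :
    ∃ js ks : ℕ → ℕ, StrictMono js ∧ StrictMono ks ∧ ∀ i, p i (js i) (ks i) := by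
  choose jf kf hj hk hp using h
  let q : ℕ → ℕ × ℕ := fun n =>
    Nat.rec (jf 0 0 0, kf 0 0 0) (fun n r => (jf (n + 1) r.1 r.2, kf (n + 1) r.1 r.2)) n
  refine ⟨fun n => (q n).1, fun n => (q n).2, strictMono_nat_of_lt_succ fun n => hj _ _ _,
    strictMono_nat_of_lt_succ fun n => hk _ _ _, ?_⟩
  rintro (_ | n)
  exacts [hp 0 0 0, hp _ _ _]

theorem strongIStatConv_has_strong_convergent_subseq_general
    (P : PMSpace S)
    (I : Set (Set (ℕ × ℕ))) (hI : StronglyAdmissible I)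
    (x : ℕ → ℕ → S) (a : S) (hx : StrongIStatConv I P x a) :
    ∃ js ks : ℕ → ℕ, StrictMono js ∧ StrictMono ks ∧
      ∀ i : ℕ, 1 ≤ i → dL (P.F (x (js i) (ks i)) a) eps0 < 1 / (i : ℝ) := by
  obtain ⟨js, ks, hjs, hks, hlt⟩ := exists_strictMono_pair_of_forall_exists
    fun i => hx.exists_dL_lt hI (t := 1 / ((i : ℝ) + 1)) (by positivity)
  refine ⟨js, ks, hjs, hks, fun i hi => (hlt i).trans_le ?_⟩
  have hi_pos : (0 : ℝ) < i := by exact_mod_cast hi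
  exact one_div_le_one_div_of_le hi_pos (by linarith)

/-- In a PM space, a double sequence that is strong `I`-statistically
convergent to `a` (for a non-trivial strongly admissible ideal `I`) has a
subsequence strongly converging to `a`: there are strictly increasing index
sequences `(j_i)`, `(k_i)` with `d_L(F_{x_{j_i k_i} a}, ε₀) < 1/i` for all
`i ≥ 1`. -/
theorem strongIStatConv_has_strong_convergent_subseq
    (P : PMSpace S) (hτ : TriContinuous P)
    (I : Set (Set (ℕ × ℕ))) (hI : StronglyAdmissible I)
    (x : ℕ → ℕ → S) (a : S) (hx : StrongIStatConv I P x a) :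
    ∃ js ks : ℕ → ℕ, StrictMono js ∧ StrictMono ks ∧
      ∀ i : ℕ, 1 ≤ i → dL (P.F (x (js i) (ks i)) a) eps0 < 1 / (i : ℝ) :=
  strongIStatConv_has_strong_convergent_subseq_general P I hI x a hx
end

section
/- Let (S,𝔉,τ) be a PM space and I a strongly admissible ideal on ℕ×ℕ. Every strong I*-statistically pre-Cauchy double sequence in S is strong I-statistically pre-Cauchy. -/
open Set

variable {S : Type*}

/-- Strong `I*`-statistically pre-Cauchy: there is `M ∈ F(I)` such that the
pre-Cauchy counting ratios tend to `0` as `m,n → ∞` along `(m,n) ∈ M`. -/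
def StrongIStarStatPreCauchy (I : Set (Set (ℕ × ℕ))) (P : PMSpace S)
    (x : ℕ → ℕ → S) : Prop :=
  ∃ M : Set (ℕ × ℕ), Mᶜ ∈ I ∧ ∀ t > (0:ℝ), ∀ ε > (0:ℝ), ∃ N : ℕ,
    ∀ m n : ℕ, (m, n) ∈ M → N ≤ m → N ≤ n →
      dens2 {q : (ℕ × ℕ) × (ℕ × ℕ) |
        t ≤ dL (P.F (x q.1.1 q.1.2) (x q.2.1 q.2.2)) eps0} m n < ε

/-
Along `M ∈ F(I)` the counting ratios are eventually below `δ`, so the set where they reach `δ`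
lies in `Mᶜ` together with finitely many rows and columns of `ℕ × ℕ`; strong admissibility puts
each of these in `I`, and `I` is closed under finite unions and subsets.
-/

namespace IsIdeal

variable {α : Type*} {I : Set (Set α)}

theorem biUnion_finset_mem {ι : Type*} (hI : IsIdeal I) (s : Finset ι) {A : ι → Set α}
    (hA : ∀ i ∈ s, A i ∈ I) : ⋃ i ∈ s, A i ∈ I := by
  classical
  induction s using Finset.induction_on with
  | empty => simpa using hI.1
  | insert i s _ ih =>
    rw [Finset.set_biUnion_insert]
    exact hI.union_mem (hA i (Finset.mem_insert_self i s))
      (ih fun j hj => hA j (Finset.mem_insert_of_mem hj))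

theorem setOf_fst_lt_mem {I : Set (Set (ℕ × ℕ))} (hI : IsIdeal I)
    (hrow : ∀ i : ℕ, {i} ×ˢ (univ : Set ℕ) ∈ I) (N : ℕ) : {p : ℕ × ℕ | p.1 < N} ∈ I := by
  have hband : {p : ℕ × ℕ | p.1 < N} = ⋃ i ∈ Finset.range N, {i} ×ˢ (univ : Set ℕ) := by
    ext p
    simp
  rw [hband]
  exact hI.biUnion_finset_mem _ fun i _ => hrow i

theorem setOf_snd_lt_mem {I : Set (Set (ℕ × ℕ))} (hI : IsIdeal I)
    (hcol : ∀ i : ℕ, (univ : Set ℕ) ×ˢ {i} ∈ I) (N : ℕ) : {p : ℕ × ℕ | p.2 < N} ∈ I := by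
  have hband : {p : ℕ × ℕ | p.2 < N} = ⋃ i ∈ Finset.range N, (univ : Set ℕ) ×ˢ {i} := by
    ext p
    simp
  rw [hband]
  exact hI.biUnion_finset_mem _ fun i _ => hcol i

theorem setOf_le_mem_of_eventually_lt {I : Set (Set (ℕ × ℕ))} (hI : IsIdeal I)
    (hrow : ∀ i : ℕ, {i} ×ˢ (univ : Set ℕ) ∈ I) (hcol : ∀ i : ℕ, (univ : Set ℕ) ×ˢ {i} ∈ I)
    {M : Set (ℕ × ℕ)} (hM : Mᶜ ∈ I) {f : ℕ → ℕ → ℝ} {δ : ℝ}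
    (hf : ∃ N : ℕ, ∀ m n : ℕ, (m, n) ∈ M → N ≤ m → N ≤ n → f m n < δ) :
    {mn : ℕ × ℕ | δ ≤ f mn.1 mn.2} ∈ I := by
  obtain ⟨N, hN⟩ := hf
  have hcover : {mn : ℕ × ℕ | δ ≤ f mn.1 mn.2} ⊆
      Mᶜ ∪ ({p : ℕ × ℕ | p.1 < N} ∪ {p : ℕ × ℕ | p.2 < N}) := by
    rintro ⟨m, n⟩ hle
    by_contra hout
    simp only [mem_union, mem_compl_iff, mem_ofPred_eq, not_or, not_not, not_lt] at hout
    exact (hN m n hout.1 hout.2.1 hout.2.2).not_ge hle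
  exact hI.mem_of_subset hcover
    (hI.union_mem hM (hI.union_mem (hI.setOf_fst_lt_mem hrow N) (hI.setOf_snd_lt_mem hcol N)))

end IsIdeal

/-- For a strongly admissible ideal `I`, every strong `I*`-statistically
pre-Cauchy double sequence in a PM space is strong `I`-statistically
pre-Cauchy. -/
theorem strongIStarStatPreCauchy_implies_strongIStatPreCauchy
    (P : PMSpace S)
    (I : Set (Set (ℕ × ℕ))) (hI : StronglyAdmissible I)
    (x : ℕ → ℕ → S) (hx : StrongIStarStatPreCauchy I P x) :
    StrongIStatPreCauchy I P x := by
  obtain ⟨hideal, -, hbands⟩ := hI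
  obtain ⟨M, hM, hlim⟩ := hx
  intro t ht δ hδ
  exact hideal.setOf_le_mem_of_eventually_lt (fun i => (hbands i).1) (fun i => (hbands i).2) hM
    (hlim t ht δ hδ)
end
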